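/- Let θ > −2 and let Q be an n×n real matrix and q ∈ ℝⁿ. For each x ∈ ℝⁿ define φₓ : ℝᵐ → ℝ by φₓ(h) = −(1/2)((θ/2)+1)hᵀΣΣᵀh + hᵀ(δ(x) − Σ(η̂ᵀx + ξ̂ᵀ) − (θ/2)ΣΛᵀ(Qx + q)), where δ(x) = a + Ax − r·1. Then φₓ attains its unique global maximum over ℝᵐ at h = ĥ(x) = −(ΣΣᵀ)⁻¹ΣΛᵀ(Qx + q); that is, φₓ(h) ≤ φₓ(ĥ(x)) for all h ∈ ℝᵐ with equality only at h = ĥ(x). -/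

import Mathlib

open Matrix

/-- Investor's half of the saddle-point conditions (condition (1) of Proposition 3.1,
verified in Section 4 of the paper): for `θ > -2`, the concave quadratic
`φₓ(h) = -(1/2)((θ/2)+1)hᵀΣΣᵀh + hᵀ(δ(x) - Σ(η̂ᵀx + ξ̂ᵀ) - (θ/2)ΣΛᵀ(Qx + q))`
attains its unique global maximum over `ℝᵐ` at `h = ĥ(x) = -(ΣΣᵀ)⁻¹ΣΛᵀ(Qx + q)`. -/
theorem investor_saddle_point_condition
    {m n : ℕ} (hm : 0 < m) (hn : 0 < n)
    (S : Matrix (Fin m) (Fin (n + m)) ℝ) (hS : (S * Sᵀ).PosDef)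
    (L : Matrix (Fin n) (Fin (n + m)) ℝ)
    (A : Matrix (Fin m) (Fin n) ℝ) (a : Fin m → ℝ) (r : ℝ)
    (θ : ℝ) (hθ : -2 < θ)
    (Q : Matrix (Fin n) (Fin n) ℝ) (q : Fin n → ℝ) :
    ∀ x : Fin n → ℝ,
      let δ : (Fin n → ℝ) → (Fin m → ℝ) :=
        fun x => a + A *ᵥ x - r • (1 : Fin m → ℝ)
      let ηhat : Matrix (Fin n) (Fin (n + m)) ℝ := (Qᵀ * L * Sᵀ + Aᵀ) * (S * Sᵀ)⁻¹ * S
      let ξhat : Fin (n + m) → ℝ :=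
        ((a - r • (1 : Fin m → ℝ)) + (q ᵥ* (L * Sᵀ))) ᵥ* ((S * Sᵀ)⁻¹ * S)
      let φ : (Fin m → ℝ) → ℝ :=
        fun h =>
          -(1 / 2) * ((θ / 2) + 1) * (h ⬝ᵥ (S * Sᵀ) *ᵥ h) +
            h ⬝ᵥ (δ x - S *ᵥ (ηhatᵀ *ᵥ x + ξhat) -
              (θ / 2) • ((S * Lᵀ) *ᵥ (Q *ᵥ x + q)))
      let hhat : Fin m → ℝ := -(((S * Sᵀ)⁻¹ * S * Lᵀ) *ᵥ (Q *ᵥ x + q))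
      (∀ h : Fin m → ℝ, φ h ≤ φ hhat) ∧
      (∀ h : Fin m → ℝ, φ h = φ hhat → h = hhat) := by
  intro x δ ηhat ξhat φ hhat
  have hMsymm : (S * Sᵀ)ᵀ = S * Sᵀ := by
    rw [Matrix.transpose_mul, Matrix.transpose_transpose]
  have hMinv : S * Sᵀ * (S * Sᵀ)⁻¹ = 1 :=
    Matrix.mul_nonsing_inv _ hS.det_pos.ne'.isUnit
  have hMinvT : ((S * Sᵀ)⁻¹)ᵀ = (S * Sᵀ)⁻¹ := by
    rw [Matrix.transpose_nonsing_inv, hMsymm]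
  set v : Fin m → ℝ := (S * Lᵀ) *ᵥ (Q *ᵥ x + q) with hvdef
  set c : ℝ := θ / 2 + 1 with hcdef
  have hc : 0 < c := by rw [hcdef]; linarith
  -- hhat = -((S*Sᵀ)⁻¹ *ᵥ v)
  have hhat_eq : hhat = -((S * Sᵀ)⁻¹ *ᵥ v) := by
    show -(((S * Sᵀ)⁻¹ * S * Lᵀ) *ᵥ (Q *ᵥ x + q)) = _
    rw [hvdef, Matrix.mulVec_mulVec, Matrix.mul_assoc]
  -- (S*Sᵀ) *ᵥ hhat = -v
  have hMv : (S * Sᵀ) *ᵥ hhat = -v := by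
    rw [hhat_eq, Matrix.mulVec_neg, Matrix.mulVec_mulVec, hMinv, Matrix.one_mulVec]
  have hSeta : S * ηhatᵀ = S * Lᵀ * Q + A := by
    simp only [ηhat, Matrix.transpose_mul, Matrix.transpose_add,
      Matrix.transpose_transpose, hMinvT]
    rw [← Matrix.mul_assoc, ← Matrix.mul_assoc, hMinv, Matrix.one_mul,
      ← Matrix.mul_assoc]
  have hSxi : S *ᵥ ξhat = (a - r • (1 : Fin m → ℝ)) + (S * Lᵀ) *ᵥ q := by
    have h1 : q ᵥ* (L * Sᵀ) = (S * Lᵀ) *ᵥ q := by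
      rw [← Matrix.mulVec_transpose, Matrix.transpose_mul, Matrix.transpose_transpose]
    show S *ᵥ (((a - r • (1 : Fin m → ℝ)) + (q ᵥ* (L * Sᵀ))) ᵥ* ((S * Sᵀ)⁻¹ * S)) = _
    rw [h1, ← Matrix.mulVec_transpose, Matrix.mulVec_mulVec, Matrix.transpose_mul,
      hMinvT, ← Matrix.mul_assoc, hMinv, Matrix.one_mulVec]
  have hlin : δ x - S *ᵥ (ηhatᵀ *ᵥ x + ξhat) - (θ / 2) • v = -(c • v) := by
    have h2 : S *ᵥ (ηhatᵀ *ᵥ x) = (S * Lᵀ) *ᵥ (Q *ᵥ x) + A *ᵥ x := by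
      rw [Matrix.mulVec_mulVec, hSeta, Matrix.add_mulVec, ← Matrix.mulVec_mulVec]
    have h3 : v = (S * Lᵀ) *ᵥ (Q *ᵥ x) + (S * Lᵀ) *ᵥ q := by
      rw [hvdef, Matrix.mulVec_add]
    rw [Matrix.mulVec_add, h2, hSxi, h3]
    show a + A *ᵥ x - r • (1 : Fin m → ℝ) - _ - _ = _
    funext i
    simp only [hcdef, Pi.add_apply, Pi.sub_apply, Pi.neg_apply, Pi.smul_apply,
      smul_eq_mul]
    ring
  have hφ : ∀ h, φ h = -(1 / 2) * c * (h ⬝ᵥ (S * Sᵀ) *ᵥ h) - c * (h ⬝ᵥ v) := by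
    intro h
    show -(1 / 2) * (θ / 2 + 1) * _ + h ⬝ᵥ (δ x - S *ᵥ (ηhatᵀ *ᵥ x + ξhat) - (θ / 2) • v) = _
    rw [hlin, dotProduct_neg, dotProduct_smul, smul_eq_mul, ← hcdef]
    ring
  have hsymmdot : ∀ y z : Fin m → ℝ, y ⬝ᵥ (S * Sᵀ) *ᵥ z = z ⬝ᵥ (S * Sᵀ) *ᵥ y := by
    intro y z
    rw [Matrix.dotProduct_mulVec, ← Matrix.mulVec_transpose, hMsymm, dotProduct_comm]
  have hvdot : ∀ h : Fin m → ℝ, h ⬝ᵥ v = -(h ⬝ᵥ (S * Sᵀ) *ᵥ hhat) := by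
    intro h
    rw [hMv, dotProduct_neg, neg_neg]
  have key : ∀ h : Fin m → ℝ,
      φ hhat - φ h = (1 / 2) * c * ((h - hhat) ⬝ᵥ (S * Sᵀ) *ᵥ (h - hhat)) := by
    intro h
    rw [hφ, hφ, hvdot, hvdot, sub_dotProduct, Matrix.mulVec_sub,
      dotProduct_sub, dotProduct_sub, hsymmdot hhat h]
    ring
  have hpos : ∀ z : Fin m → ℝ, z ≠ 0 → 0 < z ⬝ᵥ (S * Sᵀ) *ᵥ z := by
    intro z hz
    simpa using hS.dotProduct_mulVec_pos hz
  constructor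
  · intro h
    have hge : 0 ≤ (h - hhat) ⬝ᵥ (S * Sᵀ) *ᵥ (h - hhat) := by
      rcases eq_or_ne (h - hhat) 0 with h0 | h0
      · rw [h0]; simp
      · exact (hpos _ h0).le
    have h1 : 0 ≤ (1 / 2) * c * ((h - hhat) ⬝ᵥ (S * Sᵀ) *ᵥ (h - hhat)) :=
      mul_nonneg (mul_nonneg (by norm_num) hc.le) hge
    have h2 : 0 ≤ φ hhat - φ h := by rw [key h]; exact h1
    exact sub_nonneg.mp h2
  · intro h heq
    by_contra hne
    have h0 : h - hhat ≠ 0 := sub_ne_zero.mpr hne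
    have hp := hpos _ h0
    have hk := key h
    rw [heq, sub_self] at hk
    have h1 : 0 < (1 / 2) * c * ((h - hhat) ⬝ᵥ (S * Sᵀ) *ᵥ (h - hhat)) :=
      mul_pos (mul_pos (by norm_num) hc) hp
    exact absurd hk.symm h1.ne'
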